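/- Let (M,i) be an image-finite pointed modal transition system over a finite event set Act such that (M,i) ⊨ᵃ ψ for every formula ψ ∈ Φ. Then for every state s that is Rᶜ-reachable from i and every may-capable transition (s,α,s') ∈ Rᶜ, there exists a must-transition (s,α,s'') ∈ Rᵃ with (M,s'') ⪯ (M,s'). -/

import Mathlib

/-- A mixed transition system over event set `Act` with state set `σ`:
two transition relations `Ra` (asserted/must) and `Rc` (consistent/may). -/
structure MTS (Act σ : Type) where
  Ra : σ → Act → σ → Prop
  Rc : σ → Act → σ → Prop

namespace MTS

/-- `M` is a modal transition system iff `Ra ⊆ Rc`. -/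
def IsModal {Act σ : Type} (M : MTS Act σ) : Prop :=
  ∀ s α t, M.Ra s α t → M.Rc s α t

/-- `M` is image-finite. -/
def ImageFinite {Act σ : Type} (M : MTS Act σ) : Prop :=
  ∀ (s : σ) (α : Act), {t | M.Ra s α t}.Finite ∧ {t | M.Rc s α t}.Finite

end MTS

/-- A labelled transition system viewed as a mixed transition system `(Σ, R, R)`. -/
def LTS {Act σ : Type} (R : σ → Act → σ → Prop) : MTS Act σ := ⟨R, R⟩

/-- `Q` is a refinement from `M` to `N`. -/
def IsRefinement {Act σ τ : Type} (M : MTS Act σ) (N : MTS Act τ) (Q : σ → τ → Prop) : Prop :=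
  ∀ s t, Q s t → ∀ α : Act,
    (∀ s', M.Ra s α s' → ∃ t', N.Ra t α t' ∧ Q s' t') ∧
    (∀ t', N.Rc t α t' → ∃ s', M.Rc s α s' ∧ Q s' t')

/-- `(M,i) ⪯ (N,j)`: the pointed system `(N,j)` refines `(M,i)`. -/
def Refines {Act σ τ : Type} (M : MTS Act σ) (i : σ) (N : MTS Act τ) (j : τ) : Prop :=
  ∃ Q, IsRefinement M N Q ∧ Q i j

/-- Modes for the two judgments of the semantics: `a` (asserted), `c` (consistent). -/
inductive RMode where
  | a | c

/-- The dual mode: `¬a = c` and `¬c = a`. -/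
def RMode.negm : RMode → RMode
  | .a => .c
  | .c => .a

/-- The transition relation of mode `m`. -/
def MTS.R {Act σ : Type} (M : MTS Act σ) : RMode → σ → Act → σ → Prop
  | .a => M.Ra
  | .c => M.Rc

/-- Formulas of Hennessy–Milner logic over `Act`. -/
inductive HML (Act : Type) where
  | tt
  | neg (φ : HML Act)
  | dia (α : Act) (φ : HML Act)
  | and (φ ψ : HML Act)

/-- Larsen's semantics of Hennessy–Milner logic with two judgments `⊨ᵃ`, `⊨ᶜ`. -/
def Sat {Act σ : Type} (M : MTS Act σ) : HML Act → RMode → σ → Prop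
  | .tt, _, _ => True
  | .neg φ, m, s => ¬ Sat M φ m.negm s
  | .dia α φ, m, s => ∃ s', M.R m s α s' ∧ Sat M φ m s'
  | .and φ ψ, m, s => Sat M φ m s ∧ Sat M ψ m s

namespace HML

/-- `[α]φ = ¬⟨α⟩¬φ`. -/
def box {Act : Type} (α : Act) (φ : HML Act) : HML Act := .neg (.dia α (.neg φ))

/-- `φ ∨ ψ = ¬(¬φ ∧ ¬ψ)`. -/
def orf {Act : Type} (φ ψ : HML Act) : HML Act := .neg (.and (.neg φ) (.neg ψ))

/-- Finite conjunction (empty conjunction is `tt`). -/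
def bigAnd {Act : Type} : List (HML Act) → HML Act
  | [] => .tt
  | φ :: l => .and φ (bigAnd l)

/-- Finite disjunction (empty disjunction is `¬tt`). -/
def bigOr {Act : Type} : List (HML Act) → HML Act
  | [] => .neg .tt
  | φ :: l => orf φ (bigOr l)

/-- Modal depth of an HML formula. -/
def depth {Act : Type} : HML Act → ℕ
  | .tt => 0
  | .neg φ => φ.depth
  | .dia _ φ => 1 + φ.depth
  | .and φ ψ => max φ.depth ψ.depth

end HML

/-- Terms of the process algebra MPA. -/
inductive MPA (Act : Type) where
  | zero
  | bot
  | prefMust (α : Act) (p : MPA Act)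
  | prefMay (α : Act) (p : MPA Act)
  | plus (p q : MPA Act)

namespace MPA

variable {Act : Type} [DecidableEq Act]

/-- Must-successors of an MPA term for event `β` (structural operational semantics). -/
def must : MPA Act → Act → List (MPA Act)
  | .zero, _ => []
  | .bot, _ => []
  | .prefMust α p, β => if β = α then [p] else []
  | .prefMay _ _, _ => []
  | .plus p q, β => p.must β ++ q.must β

/-- All (must or may) successors of an MPA term for event `β`. -/
def may : MPA Act → Act → List (MPA Act)
  | .zero, _ => []
  | .bot, _ => [.bot]
  | .prefMust α p, β => if β = α then [p] else []
  | .prefMay α p, β => if β = α then [p] else []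
  | .plus p q, β => p.may β ++ q.may β

/-- The modal transition system `⟦·⟧` given by the structural operational semantics of MPA:
`Ra` is the set of must-transitions, `Rc` the set of all transitions. -/
def mts : MTS Act (MPA Act) :=
  ⟨fun p α q => q ∈ p.must α, fun p α q => q ∈ p.may α⟩

theorem sizeOf_lt_of_mem_must :
    ∀ (t : MPA Act) (α : Act) (r : MPA Act), r ∈ t.must α → sizeOf r < sizeOf t := by
  intro t
  induction t with
  | zero => intro α r h; simp [must] at h
  | bot => intro α r h; simp [must] at h
  | prefMust β p ih =>
      intro α r h
      simp only [must] at h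
      split at h <;> simp_all
  | prefMay β p ih => intro α r h; simp [must] at h
  | plus p q ihp ihq =>
      intro α r h
      simp only [must, List.mem_append] at h
      rcases h with h | h
      · have := ihp α r h; simp; omega
      · have := ihq α r h; simp; omega

theorem sizeOf_le_of_mem_may :
    ∀ (t : MPA Act) (α : Act) (r : MPA Act), r ∈ t.may α → sizeOf r ≤ sizeOf t := by
  intro t
  induction t with
  | zero => intro α r h; simp [may] at h
  | bot => intro α r h; simp [may] at h; simp [h]
  | prefMust β p ih =>
      intro α r h
      simp only [may] at h
      split at h <;> simp_all
  | prefMay β p ih =>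
      intro α r h
      simp only [may] at h
      split at h <;> simp_all
  | plus p q ihp ihq =>
      intro α r h
      simp only [may, List.mem_append] at h
      rcases h with h | h
      · have := ihp α r h; simp; omega
      · have := ihq α r h; simp; omega

theorem sizeOf_lt_plus_of_mem_may (p q : MPA Act) (α : Act) (r : MPA Act)
    (h : r ∈ (MPA.plus p q).may α) : sizeOf r < sizeOf (MPA.plus p q) := by
  simp only [may, List.mem_append] at h
  rcases h with h | h
  · have := sizeOf_le_of_mem_may p α r h; simp; omega
  · have := sizeOf_le_of_mem_may q α r h; simp; omega

end MPA

/-- The characteristic Hennessy–Milner formula `φ_p` of an MPA term `p`. -/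
noncomputable def charForm {Act : Type} [Fintype Act] [DecidableEq Act] : MPA Act → HML Act
  | .zero =>
      .bigAnd (((Finset.univ : Finset Act).toList).map fun α => .neg (.dia α .tt))
  | .bot => .tt
  | .prefMust α p =>
      .and (.dia α (charForm p)) (.and (HML.box α (charForm p))
        (.bigAnd ((((Finset.univ : Finset Act).toList).filter (fun β => β ≠ α)).map
          fun β => .neg (.dia β .tt))))
  | .prefMay α p =>
      .and (HML.box α (charForm p))
        (.bigAnd ((((Finset.univ : Finset Act).toList).filter (fun β => β ≠ α)).map
          fun β => .neg (.dia β .tt)))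
  | .plus p q =>
      .and
        (.bigAnd (((Finset.univ : Finset Act).toList).flatMap fun α =>
          ((MPA.plus p q).must α).attach.map fun r => HML.dia α (charForm r.1)))
        (.bigAnd (((Finset.univ : Finset Act).toList).map fun α =>
          HML.box α (.bigOr (((MPA.plus p q).may α).attach.map fun r => charForm r.1))))
decreasing_by
  all_goals first
    | exact MPA.sizeOf_lt_of_mem_must _ _ _ r.2
    | exact MPA.sizeOf_lt_plus_of_mem_may _ _ _ _ r.2
    | (simp; omega)
    | simp

/-- The formula `ψ_{w,α,p} = [δ₁]…[δₙ](⟨α⟩φ_p ∨ ¬⟨α⟩φ_p)`; the set `Φ` consists of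
all such formulas. -/
noncomputable def psiForm {Act : Type} [Fintype Act] [DecidableEq Act]
    (w : List Act) (α : Act) (p : MPA Act) : HML Act :=
  w.foldr (fun δ φ => HML.box δ φ)
    (HML.orf (.dia α (charForm p)) (.neg (.dia α (charForm p))))

/-- `Rᶜ`-reachability in a mixed transition system. -/
def MTS.ReachC {Act σ : Type} (M : MTS Act σ) : σ → σ → Prop :=
  Relation.ReflTransGen (fun s t => ∃ α, M.Rc s α t)

/-!
Write `RefinesUpTo M N n` for the depth-`n` approximants of refinement. The characteristic
formula of the depth-`n` unfolding of a state `t` into an MPA term holds at `v` in mode `a` iff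
`v` refines `t` up to depth `n`, and in mode `c` iff `t` and `v` are consistent up to depth `n`.
Hence the formulas of `Φ`, which hold at every reachable state, let a may-transition be matched
by must-transitions at every finite depth, and by image-finiteness by a single one. On an
image-finite system, consistency at every depth between a state and a reachable state is then a
refinement relation, and it relates that must-successor to `s'`.
-/

section

variable {Act σ τ υ : Type}

namespace MTS

/-- A depth-`n` refinement from `M` to `M.dual` is depth-`n` consistency: every must-transition
on either side is matched by a may-transition on the other. -/
def dual (M : MTS Act σ) : MTS Act σ := ⟨M.Rc, M.Ra⟩

end MTS

def RefinesUpTo (M : MTS Act σ) (N : MTS Act τ) : ℕ → σ → τ → Prop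
  | 0, _, _ => True
  | n + 1, s, t => ∀ α : Act,
      (∀ s', M.Ra s α s' → ∃ t', N.Ra t α t' ∧ RefinesUpTo M N n s' t') ∧
      (∀ t', N.Rc t α t' → ∃ s', M.Rc s α s' ∧ RefinesUpTo M N n s' t')

namespace RefinesUpTo

variable {M : MTS Act σ} {N : MTS Act τ} {K : MTS Act υ}

theorem of_le : ∀ {m n : ℕ} {s : σ} {t : τ}, m ≤ n → RefinesUpTo M N n s t →
    RefinesUpTo M N m s t
  | 0, _, _, _, _, _ => trivial
  | m + 1, n + 1, _, _, hmn, h => fun α =>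
    ⟨fun s' hs' => ((h α).1 s' hs').imp fun _ ⟨ht', hr⟩ => ⟨ht', of_le (by omega) hr⟩,
     fun t' ht' => ((h α).2 t' ht').imp fun _ ⟨hs', hr⟩ => ⟨hs', of_le (by omega) hr⟩⟩

theorem refl : ∀ (n : ℕ) (s : σ), RefinesUpTo M M n s s
  | 0, _ => trivial
  | n + 1, _ => fun _ =>
    ⟨fun s' hs' => ⟨s', hs', refl n s'⟩, fun s' hs' => ⟨s', hs', refl n s'⟩⟩

theorem trans : ∀ {n : ℕ} {s : σ} {t : τ} {u : υ},
    RefinesUpTo M N n s t → RefinesUpTo N K n t u → RefinesUpTo M K n s u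
  | 0, _, _, _, _, _ => trivial
  | _ + 1, _, _, _, hst, htu => fun α =>
    ⟨fun s' hs' =>
      let ⟨t', ht', hst'⟩ := (hst α).1 s' hs'
      let ⟨u', hu', htu'⟩ := (htu α).1 t' ht'
      ⟨u', hu', hst'.trans htu'⟩,
     fun u' hu' =>
      let ⟨t', ht', htu'⟩ := (htu α).2 u' hu'
      let ⟨s', hs', hst'⟩ := (hst α).2 t' ht'
      ⟨s', hs', hst'.trans htu'⟩⟩

theorem dual : ∀ {n : ℕ} {s : σ} {t : τ},
    RefinesUpTo M N n s t → RefinesUpTo N.dual M.dual n t s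
  | 0, _, _, _ => trivial
  | _ + 1, _, _, h => fun α =>
    ⟨fun t' ht' => ((h α).2 t' ht').imp fun _ ⟨hs', hr⟩ => ⟨hs', hr.dual⟩,
     fun s' hs' => ((h α).1 s' hs').imp fun _ ⟨ht', hr⟩ => ⟨ht', hr.dual⟩⟩

theorem mono_right {N' : MTS Act τ} (hRa : ∀ t α t', N.Ra t α t' → N'.Ra t α t')
    (hRc : ∀ t α t', N'.Rc t α t' → N.Rc t α t') :
    ∀ {n : ℕ} {s : σ} {t : τ}, RefinesUpTo M N n s t → RefinesUpTo M N' n s t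
  | 0, _, _, _ => trivial
  | _ + 1, _, _, h => fun α =>
    ⟨fun s' hs' => ((h α).1 s' hs').imp fun t' ⟨ht', hr⟩ =>
      ⟨hRa _ _ t' ht', mono_right hRa hRc hr⟩,
     fun t' ht' => ((h α).2 t' (hRc _ _ t' ht')).imp fun _ ⟨hs', hr⟩ =>
      ⟨hs', mono_right hRa hRc hr⟩⟩

theorem to_dual (hM : M.IsModal) {n : ℕ} {s t : σ} (h : RefinesUpTo M M n s t) :
    RefinesUpTo M M.dual n s t :=
  h.mono_right (N' := M.dual) hM hM

end RefinesUpTo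

@[simp] theorem RMode.negm_negm (m : RMode) : m.negm.negm = m := by
  cases m <;> rfl

section Semantics

variable (M : MTS Act σ)

theorem sat_orf (φ ψ : HML Act) (m : RMode) (s : σ) :
    Sat M (HML.orf φ ψ) m s ↔ Sat M φ m s ∨ Sat M ψ m s := by
  simp only [HML.orf, Sat, RMode.negm_negm]
  tauto

theorem sat_box (α : Act) (φ : HML Act) (m : RMode) (s : σ) :
    Sat M (HML.box α φ) m s ↔ ∀ t, M.R m.negm s α t → Sat M φ m t := by
  simp [HML.box, Sat]

theorem sat_bigAnd (l : List (HML Act)) (m : RMode) (s : σ) :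
    Sat M (HML.bigAnd l) m s ↔ ∀ φ ∈ l, Sat M φ m s := by
  induction l with
  | nil => simp [HML.bigAnd, Sat]
  | cons φ l ih => simp [HML.bigAnd, Sat, ih]

theorem sat_bigOr (l : List (HML Act)) (m : RMode) (s : σ) :
    Sat M (HML.bigOr l) m s ↔ ∃ φ ∈ l, Sat M φ m s := by
  induction l with
  | nil => simp [HML.bigOr, Sat]
  | cons φ l ih => simp [HML.bigOr, sat_orf, ih]

variable [Fintype Act] [DecidableEq Act]

theorem sat_charForm_plus (p q : MPA Act) (m : RMode) (s : σ) :
    Sat M (charForm (.plus p q)) m s ↔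
      (∀ α, ∀ r ∈ (MPA.plus p q).must α,
        ∃ s', M.R m s α s' ∧ Sat M (charForm r) m s') ∧
      (∀ α s', M.R m.negm s α s' →
        ∃ r ∈ (MPA.plus p q).may α, Sat M (charForm r) m s') := by
  rw [charForm]
  simp only [Sat, sat_bigAnd, List.forall_mem_flatMap, List.forall_mem_map, sat_box, sat_bigOr]
  simp

end Semantics

namespace MPA

variable [DecidableEq Act]

def bigPlus (l : List (MPA Act)) : MPA Act := l.foldr .plus .zero

@[simp] theorem must_bigPlus (l : List (MPA Act)) (β : Act) :
    (bigPlus l).must β = l.flatMap (·.must β) := by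
  induction l with
  | nil => rfl
  | cons p l ih => simp [bigPlus, must, ← ih]

@[simp] theorem may_bigPlus (l : List (MPA Act)) (β : Act) :
    (bigPlus l).may β = l.flatMap (·.may β) := by
  induction l with
  | nil => rfl
  | cons p l ih => simp [bigPlus, may, ← ih]

end MPA

namespace MTS

variable [Fintype Act] [DecidableEq Act]

/-- The outer `plus zero` makes `charForm` take its `plus` clause even when `t` has no
transitions. -/
noncomputable def unfolding (M : MTS Act σ) (hMf : M.ImageFinite) : ℕ → σ → MPA Act
  | 0, _ => .bot
  | n + 1, t => .plus .zero (.bigPlus ((Finset.univ : Finset Act).toList.flatMap fun β =>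
      (hMf t β).1.toFinset.toList.map (fun t' => .prefMust β (unfolding M hMf n t')) ++
      (hMf t β).2.toFinset.toList.map (fun t' => .prefMay β (unfolding M hMf n t'))))

variable (M : MTS Act σ) (hMf : M.ImageFinite)

theorem mem_must_unfolding (n : ℕ) (t : σ) (β : Act) (r : MPA Act) :
    r ∈ (M.unfolding hMf (n + 1) t).must β ↔
      ∃ t', M.Ra t β t' ∧ M.unfolding hMf n t' = r := by
  simp [unfolding, or_and_right, exists_or, MPA.must, eq_comm]

theorem mem_may_unfolding (hM : M.IsModal) (n : ℕ) (t : σ) (β : Act) (r : MPA Act) :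
    r ∈ (M.unfolding hMf (n + 1) t).may β ↔
      ∃ t', M.Rc t β t' ∧ M.unfolding hMf n t' = r := by
  simp [unfolding, or_and_right, exists_or, MPA.may, eq_comm]
  exact fun t' ht' hr => ⟨t', hM _ _ _ ht', hr⟩

/-- The target system is `M` for `m = .a` and `M.dual` for `m = .c`. -/
theorem sat_charForm_unfolding_iff (hM : M.IsModal) (m : RMode) :
    ∀ (n : ℕ) (t v : σ), Sat M (charForm (M.unfolding hMf n t)) m v ↔
      RefinesUpTo M ⟨M.R m, M.R m.negm⟩ n t v
  | 0, _, _ => by simp [unfolding, charForm, Sat, RefinesUpTo]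
  | n + 1, t, v => by
    rw [unfolding, sat_charForm_plus, ← unfolding]
    simp [mem_must_unfolding, mem_may_unfolding M hMf hM, RefinesUpTo, forall_and,
      sat_charForm_unfolding_iff hM m n]

end MTS

theorem Set.Finite.exists_mem_forall_of_antitone {α : Type*} {S : Set α} (hS : S.Finite)
    {D : ℕ → α → Prop} (hD : Antitone D) (h : ∀ n, ∃ x ∈ S, D n x) : ∃ x ∈ S, ∀ n, D n x := by
  obtain ⟨x, hx, hfreq⟩ :=
    hS.frequently_exists.mp (Filter.Frequently.of_forall (f := Filter.atTop) h)
  refine ⟨x, hx, fun m => ?_⟩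
  obtain ⟨n, hmn, hn⟩ := hfreq.forall_exists_of_atTop m
  exact hD hmn x hn

theorem MTS.ReachC.sat {M : MTS Act σ} {i s : σ} (hs : M.ReachC i s) {φ : HML Act}
    (hφ : ∀ w : List Act, Sat M (w.foldr HML.box φ) .a i) : Sat M φ .a s := by
  induction hs generalizing φ with
  | refl => exact hφ []
  | tail _ hst ih =>
    obtain ⟨δ, hδ⟩ := hst
    refine (sat_box M δ φ .a _).mp (ih fun w => ?_) _ hδ
    simpa using hφ (w ++ [δ])

section PsiForms

variable [Fintype Act] [DecidableEq Act] {M : MTS Act σ} {i : σ}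

/-- At a reachable `u`, the formula of `Φ` built from the depth-`n` unfolding of `t` says: either
some must-successor refines `t` to depth `n`, or no may-successor is consistent with `t` to
depth `n`. Image-finiteness then turns the depth-wise must-successors into a single one. -/
theorem exists_ra_refinesUpTo_of_psiForms (hM : M.IsModal) (hMf : M.ImageFinite)
    (h : ∀ (w : List Act) (α : Act) (p : MPA Act), Sat M (psiForm w α p) .a i)
    {u t : σ} (hu : M.ReachC i u) {β : Act}
    (ht : ∀ n, ∃ x, M.Rc u β x ∧ RefinesUpTo M M.dual n t x) :
    ∃ u'', M.Ra u β u'' ∧ ∀ n, RefinesUpTo M M n t u'' := by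
  have hlevel : ∀ n, ∃ u'' ∈ {y | M.Ra u β y}, RefinesUpTo M M n t u'' := by
    intro n
    have hψ := (sat_orf M _ _ _ _).mp (hu.sat fun v => h v β (M.unfolding hMf n t))
    rcases hψ with ⟨u'', hu'', hsat⟩ | hnone
    · exact ⟨u'', hu'', (M.sat_charForm_unfolding_iff hMf hM .a n t u'').mp hsat⟩
    · obtain ⟨x, hx, hwx⟩ := ht n
      exact (hnone ⟨x, hx, (M.sat_charForm_unfolding_iff hMf hM .c n t x).mpr hwx⟩).elim
  exact (hMf u β).1.exists_mem_forall_of_antitone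
    (fun _ _ hmn _ => RefinesUpTo.of_le hmn) hlevel

theorem isRefinement_of_psiForms (hM : M.IsModal) (hMf : M.ImageFinite)
    (h : ∀ (w : List Act) (α : Act) (p : MPA Act), Sat M (psiForm w α p) .a i) :
    IsRefinement M M fun v u => M.ReachC i u ∧ ∀ n, RefinesUpTo M M.dual n v u := by
  rintro v u ⟨hu, hvu⟩ β
  constructor
  · intro v' hv'
    obtain ⟨u'', hu'', hv'u''⟩ :=
      exists_ra_refinesUpTo_of_psiForms hM hMf h hu fun n => (hvu (n + 1) β).1 v' hv'
    exact ⟨u'', hu'', .tail hu ⟨β, hM _ _ _ hu''⟩, fun n => (hv'u'' n).to_dual hM⟩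
  · intro u' hu'
    obtain ⟨u'', hu'', hu'u''⟩ := exists_ra_refinesUpTo_of_psiForms hM hMf h hu
      fun n => ⟨u', hu', (RefinesUpTo.refl n u').to_dual hM⟩
    obtain ⟨v', hv', hv'u''⟩ := (hMf v β).2.exists_mem_forall_of_antitone
      (D := fun n x => RefinesUpTo M M.dual n x u'') (fun _ _ hmn _ => RefinesUpTo.of_le hmn)
      fun n => (hvu (n + 1) β).2 u'' hu''
    exact ⟨v', hv', .tail hu ⟨β, hu'⟩, fun n => (hv'u'' n).trans (hu'u'' n).dual⟩

end PsiForms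

end

/-- If the image-finite `(M,i)` satisfies every formula of `Φ` in mode
`a`, then every may-capable transition `(s,α,s') ∈ Rᶜ` from an `Rᶜ`-reachable state
`s` is matched by a must-transition `(s,α,s'') ∈ Rᵃ` with `(M,s'') ⪯ (M,s')`. -/
theorem may_matched_by_must_of_psiForms {Act σ : Type} [Fintype Act] [DecidableEq Act]
    (M : MTS Act σ) (hM : M.IsModal) (hMf : M.ImageFinite) (i : σ)
    (h : ∀ (w : List Act) (α : Act) (p : MPA Act), Sat M (psiForm w α p) .a i)
    (s : σ) (hs : M.ReachC i s) (α : Act) (s' : σ) (hc : M.Rc s α s') :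
    ∃ s'', M.Ra s α s'' ∧ Refines M s'' M s' := by
  obtain ⟨s'', hs'', hs's''⟩ := exists_ra_refinesUpTo_of_psiForms hM hMf h hs
    fun n => ⟨s', hc, (RefinesUpTo.refl n s').to_dual hM⟩
  exact ⟨s'', hs'', _, isRefinement_of_psiForms hM hMf h, .tail hs ⟨α, hc⟩,
    fun n => ((hs's'' n).to_dual hM).dual⟩
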